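/- arXiv:1407.1923 — 3 statements merged into one kernel-verified Lean document; each statement's English description precedes it below -/
import Mathlib

section
/- Let Z = convexHull{(0,0),(3,0),(2,1),(1,1)} (the trapezoid with parallel sides of lengths 3 and 1, height 1, and area 2 — the largest Sei Shōnagon puzzle piece), and let P = convexHull{(0,0),(1,0),(9,8),(8,8)} (the parallelogram with side lengths 1 and 8√2). Then there is no isometry f of ℝ² with f(Z) ⊆ P. -/
open Real

noncomputable section

/-- The Euclidean plane `ℝ²`. -/
abbrev Pt : Type := EuclideanSpace ℝ (Fin 2)

/-- The point `(x, y)` of the plane. -/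
def pt (x y : ℝ) : Pt := (WithLp.equiv 2 (Fin 2 → ℝ)).symm ![x, y]

/-- The closed isosceles right triangle with vertices `(0,0)`, `(1,0)`, `(0,1)`. -/
def T : Set Pt := convexHull ℝ {pt 0 0, pt 1 0, pt 0 1}

/-- `S` is tileable by `n` copies of `T`: there are isometries `f₁, …, fₙ` of the plane
(possibly orientation-reversing) such that the sets `fᵢ(T)` have pairwise disjoint
interiors and their union is `S`. -/
def TileableBy (S : Set Pt) (n : ℕ) : Prop :=
  ∃ f : Fin n → (Pt ≃ᵢ Pt),
    (∀ i j, i ≠ j → Disjoint (interior (f i '' T)) (interior (f j '' T))) ∧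
    S = ⋃ i, f i '' T

/-- Two subsets of the plane are congruent if some isometry maps one onto the other. -/
def PlaneCongruent (P Q : Set Pt) : Prop := ∃ f : Pt ≃ᵢ Pt, f '' P = Q

/-- The family of pieces `P₁, …, P_k` forms `S`: there are isometries `g₁, …, g_k` of the
plane such that the sets `gᵢ(Pᵢ)` have pairwise disjoint interiors and their union is `S`. -/
def Forms {k : ℕ} (P : Fin k → Set Pt) (S : Set Pt) : Prop :=
  ∃ g : Fin k → (Pt ≃ᵢ Pt),
    (∀ i j, i ≠ j → Disjoint (interior (g i '' P i)) (interior (g j '' P j))) ∧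
    S = ⋃ i, g i '' P i

/-!
The parallelogram lies in the strip `0 ≤ x - y ≤ 1`, of width `1/√2`. The trapezoid contains the
two orthogonal chords `(0,0)(1,1)` and `(2,1)(3,0)` of length `√2`; an isometry carries the normal
direction of the strip back to a direction `w` with `‖w‖² = 2`, and the projections of the two
chords on `w` have squares summing to `2‖w‖² = 4`, so one of them exceeds the width `1` allowed
by the strip.
-/

open Set
open scoped RealInnerProductSpace

section InnerProductSpace

variable {E : Type*} [NormedAddCommGroup E] [InnerProductSpace ℝ E]

lemma inner_mem_Icc_of_mem_convexHull {s : Set E} {u : E} {a b : ℝ}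
    (hs : ∀ p ∈ s, ⟪u, p⟫ ∈ Icc a b) {p : E} (hp : p ∈ convexHull ℝ s) :
    ⟪u, p⟫ ∈ Icc a b :=
  convexHull_min (t := innerSL ℝ u ⁻¹' Icc a b) hs
    ((convex_Icc a b).linear_preimage (innerSL ℝ u).toLinearMap) hp

lemma IsometryEquiv.exists_inner_map_sub_map (f : E ≃ᵢ E) (u : E) :
    ∃ w : E, ‖w‖ = ‖u‖ ∧ ∀ x y, ⟪u, f x - f y⟫ = ⟪w, x - y⟫ := by
  set L := f.toRealAffineIsometryEquiv.linearIsometryEquiv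
  refine ⟨L.symm u, L.symm.norm_map u, fun x y => ?_⟩
  have hL : f x - f y = L (x - y) := by
    simpa [L] using (f.toRealAffineIsometryEquiv.map_vsub x y).symm
  rw [hL, ← L.inner_map_map (L.symm u), L.apply_symm_apply]

end InnerProductSpace

lemma inner_pt_pt (a b c d : ℝ) : ⟪pt a b, pt c d⟫ = a * c + b * d := by
  simp only [pt, WithLp.equiv_symm_apply, PiLp.inner_apply, RCLike.inner_apply, ringHom_apply,
    Fin.sum_univ_two, Matrix.cons_val_zero, Matrix.cons_val_one]
  ring

lemma pt_sub_pt (a b c d : ℝ) : pt a b - pt c d = pt (a - c) (b - d) := by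
  ext i; fin_cases i <;> simp [pt]

lemma pt_apply_zero_apply_one (w : Pt) : pt (w 0) (w 1) = w := by
  ext i; fin_cases i <;> simp [pt]

lemma inner_pt_one_one_sq_add_inner_pt_one_neg_one_sq (w : Pt) :
    ⟪w, pt 1 1⟫ ^ 2 + ⟪w, pt 1 (-1)⟫ ^ 2 = 2 * ‖w‖ ^ 2 := by
  rw [← real_inner_self_eq_norm_sq, ← pt_apply_zero_apply_one w]
  simp only [inner_pt_pt]
  ring

lemma inner_pt_one_neg_one_mem_Icc_of_mem_parallelogram {p : Pt}
    (hp : p ∈ convexHull ℝ {pt 0 0, pt 1 0, pt 9 8, pt 8 8}) :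
    ⟪pt 1 (-1), p⟫ ∈ Icc (0 : ℝ) 1 := by
  refine inner_mem_Icc_of_mem_convexHull (fun q hq => ?_) hp
  rcases hq with rfl | rfl | rfl | rfl | rfl <;> norm_num [inner_pt_pt]

/-- No isometric copy of the large trapezoid piece `Z` (parallel sides 3 and 1, height 1)
fits inside the `1 × 8√2` parallelogram. -/
theorem trapezoid_not_in_thin_parallelogram :
    ¬ ∃ f : Pt ≃ᵢ Pt,
        f '' convexHull ℝ {pt 0 0, pt 3 0, pt 2 1, pt 1 1} ⊆
          convexHull ℝ {pt 0 0, pt 1 0, pt 9 8, pt 8 8} := by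
  rintro ⟨f, hf⟩
  have hstrip : ∀ z ∈ ({pt 0 0, pt 3 0, pt 2 1, pt 1 1} : Set Pt),
      ⟪pt 1 (-1), f z⟫ ∈ Icc (0 : ℝ) 1 := fun z hz =>
    inner_pt_one_neg_one_mem_Icc_of_mem_parallelogram
      (hf (mem_image_of_mem f (subset_convexHull ℝ _ hz)))
  obtain ⟨w, hw, hfw⟩ := f.exists_inner_map_sub_map (pt 1 (-1))
  have hdiag : ⟪w, pt 1 1⟫ = ⟪pt 1 (-1), f (pt 1 1)⟫ - ⟪pt 1 (-1), f (pt 0 0)⟫ := by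
    rw [← inner_sub_right, hfw, pt_sub_pt]; norm_num
  have hanti : ⟪w, pt 1 (-1)⟫ = ⟪pt 1 (-1), f (pt 3 0)⟫ - ⟪pt 1 (-1), f (pt 2 1)⟫ := by
    rw [← inner_sub_right, hfw, pt_sub_pt]; norm_num
  have hnorm : ‖w‖ ^ 2 = 2 := by
    rw [hw, ← real_inner_self_eq_norm_sq, inner_pt_pt]; norm_num
  have hsum := inner_pt_one_one_sq_add_inner_pt_one_neg_one_sq w
  obtain ⟨h₀, h₀'⟩ := hstrip (pt 0 0) (by simp)
  obtain ⟨h₁, h₁'⟩ := hstrip (pt 3 0) (by simp)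
  obtain ⟨h₂, h₂'⟩ := hstrip (pt 2 1) (by simp)
  obtain ⟨h₃, h₃'⟩ := hstrip (pt 1 1) (by simp)
  nlinarith
end
end

section
/- The parallelogram with side lengths 1 and 8√2, namely convexHull{(0,0),(1,0),(9,8),(8,8)} ⊆ ℝ², is tileable by 16 copies of T. -/
open Real

noncomputable section

/-! The diagonal strip `y ≤ x ≤ y + 1` meets the unit lattice squares in a staircase: for each
`k` the squares with lower-left corners `(k, k)` and `(k + 1, k)`, each of which the strip cuts
along a diagonal into a copy of `T`. The parallelogram with vertices `(0,0), (1,0), (n+1,n), (n,n)`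
is the part of the strip with `0 ≤ y ≤ n`, hence the union of the `2n` triangles of the staircase,
and these have disjoint interiors because distinct lattice squares do. -/

@[simp] theorem pt_apply_zero (a b : ℝ) : pt a b 0 = a := rfl
@[simp] theorem pt_apply_one (a b : ℝ) : pt a b 1 = b := rfl

theorem pt_eta (p : Pt) : pt (p 0) (p 1) = p := by
  ext i; fin_cases i <;> rfl

theorem pt_add_pt (a b c d : ℝ) : pt a b + pt c d = pt (a + c) (b + d) := by
  ext i; fin_cases i <;> rfl

theorem smul_pt (r a b : ℝ) : r • pt a b = pt (r * a) (r * b) := by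
  ext i; fin_cases i <;> rfl

theorem pt_zero_zero : pt 0 0 = 0 := by
  ext i; fin_cases i <;> rfl

theorem T_eq_setOf : T = {p : Pt | 0 ≤ p 0 ∧ 0 ≤ p 1 ∧ p 0 + p 1 ≤ 1} := by
  apply subset_antisymm
  · refine convexHull_min ?_ ?_
    · simp [Set.insert_subset_iff, pt]
    · intro p ⟨hp0, hp1, hp⟩ q ⟨hq0, hq1, hq⟩ a b ha hb hab
      simp only [Set.mem_ofPred_eq, PiLp.add_apply, PiLp.smul_apply, smul_eq_mul]
      refine ⟨by positivity, by positivity, by nlinarith⟩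
  · rintro p ⟨h0, h1, h⟩
    have hmem := (convex_convexHull ℝ ({pt 0 0, pt 1 0, pt 0 1} : Set Pt)).sum_mem
      (t := Finset.univ) (w := ![1 - p 0 - p 1, p 0, p 1]) (z := ![pt 0 0, pt 1 0, pt 0 1])
      (fun i _ => by fin_cases i <;> simp <;> linarith)
      (by simp only [Fin.sum_univ_three, Matrix.cons_val]; ring)
      (fun i _ => subset_convexHull ℝ _ (by fin_cases i <;> simp))
    rw [T]
    convert hmem using 1
    ext i; fin_cases i <;> simp [Fin.sum_univ_three, pt]

theorem TileableBy.of_fintype {ι : Type*} [Fintype ι] {S : Set Pt} (f : ι → Pt ≃ᵢ Pt)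
    (hdisj : Pairwise fun i j => Disjoint (interior (f i '' T)) (interior (f j '' T)))
    (hS : S = ⋃ i, f i '' T) : TileableBy S (Fintype.card ι) :=
  let e := Fintype.equivFin ι
  ⟨f ∘ e.symm, fun _ _ hij => hdisj (e.symm.injective.ne hij),
    hS.trans (e.symm.surjective.iUnion_comp _).symm⟩

section UnitCube

variable {ι : Type*}

theorem disjoint_interior_of_apply_le_of_le_apply {A B : Set (EuclideanSpace ℝ ι)} {i : ι}
    {c : ℝ} (hA : ∀ p ∈ A, p i ≤ c) (hB : ∀ p ∈ B, c ≤ p i) :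
    Disjoint (interior A) (interior B) := by
  have hopen := PiLp.isOpenMap_apply 2 (fun _ : ι => ℝ) i
  have hlt : ∀ p ∈ interior A, p i < c := fun p hp => by
    have hsub : (fun q : EuclideanSpace ℝ ι => q i) '' A ⊆ Set.Iic c := by
      rintro _ ⟨q, hq, rfl⟩; exact hA q hq
    simpa using interior_mono hsub (hopen.image_interior_subset A ⟨p, hp, rfl⟩)
  have hgt : ∀ p ∈ interior B, c < p i := fun p hp => by
    have hsub : (fun q : EuclideanSpace ℝ ι => q i) '' B ⊆ Set.Ici c := by
      rintro _ ⟨q, hq, rfl⟩; exact hB q hq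
    simpa using interior_mono hsub (hopen.image_interior_subset B ⟨p, hp, rfl⟩)
  exact Set.disjoint_left.2 fun p hpA hpB => (hlt p hpA).not_gt (hgt p hpB)

def unitCube (z : ι → ℤ) : Set (EuclideanSpace ℝ ι) :=
  {p | ∀ i, (z i : ℝ) ≤ p i ∧ p i ≤ z i + 1}

theorem pairwise_disjoint_interior_unitCube :
    Pairwise fun z z' : ι → ℤ => Disjoint (interior (unitCube z)) (interior (unitCube z')) := by
  have key : ∀ z z' : ι → ℤ, ∀ i, z i < z' i →
      Disjoint (interior (unitCube z)) (interior (unitCube z')) := fun z z' i hi => by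
    have hi' : (z i : ℝ) + 1 ≤ z' i := by exact_mod_cast hi
    exact disjoint_interior_of_apply_le_of_le_apply (i := i)
      (fun p hp => (hp i).2) (fun p hp => hi'.trans (hp i).1)
  intro z z' hne
  obtain ⟨i, hi⟩ := Function.ne_iff.1 hne
  rcases hi.lt_or_gt with h | h
  · exact key z z' i h
  · exact (key z' z i h).symm

end UnitCube

def flipCoord {ι : Type*} [Fintype ι] [DecidableEq ι] (i : ι) :
    EuclideanSpace ℝ ι ≃ₗᵢ[ℝ] EuclideanSpace ℝ ι :=
  LinearIsometryEquiv.piLpCongrRight 2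
    fun j => if j = i then LinearIsometryEquiv.neg ℝ else LinearIsometryEquiv.refl ℝ ℝ

theorem flipCoord_apply {ι : Type*} [Fintype ι] [DecidableEq ι] (i j : ι)
    (p : EuclideanSpace ℝ ι) : flipCoord i p j = if j = i then -p j else p j := by
  by_cases h : j = i <;> simp [flipCoord, h]

def diagStrip : Set Pt := {p | p 1 ≤ p 0 ∧ p 0 ≤ p 1 + 1}

open scoped Pointwise in
theorem convexHull_parallelogram {n : ℝ} (hn : 0 < n) :
    convexHull ℝ {pt 0 0, pt 1 0, pt (n + 1) n, pt n n} =
      {p : Pt | 0 ≤ p 1 ∧ p 1 ≤ n} ∩ diagStrip := by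
  have hvert : ({pt 0 0, pt 1 0, pt (n + 1) n, pt n n} : Set Pt) = {0, pt 1 0} + {0, pt n n} := by
    ext p
    simp only [Set.mem_add, Set.mem_insert_iff, Set.mem_singleton_iff, exists_eq_or_imp,
      exists_eq_left, zero_add, add_zero, pt_add_pt, pt_zero_zero, add_comm (1 : ℝ) n,
      eq_comm (b := p)]
    tauto
  ext p
  rw [hvert, convexHull_add, convexHull_pair, convexHull_pair]
  simp only [segment_eq_image, Set.mem_add, Set.mem_image, smul_zero, zero_add, smul_pt]
  constructor
  · rintro ⟨_, ⟨s, ⟨hs0, hs1⟩, rfl⟩, _, ⟨t, ⟨ht0, ht1⟩, rfl⟩, rfl⟩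
    simp only [pt_add_pt, diagStrip, Set.mem_inter_iff, Set.mem_ofPred_eq, pt_apply_zero,
      pt_apply_one]
    refine ⟨⟨by positivity, by nlinarith⟩, by linarith, by linarith⟩
  · rintro ⟨⟨h0, hn'⟩, hlo, hhi⟩
    refine ⟨_, ⟨p 0 - p 1, ⟨by linarith, by linarith⟩, rfl⟩, _,
      ⟨p 1 / n, ⟨by positivity, (div_le_one hn).2 hn'⟩, rfl⟩, ?_⟩
    conv_rhs => rw [← pt_eta p]
    rw [pt_add_pt]
    congr 1 <;> field_simp <;> ring

def stairCorner (k : ℕ) (j : Fin 2) : Fin 2 → ℤ := ![k + j, k]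

theorem stairCorner_injective (n : ℕ) :
    Function.Injective fun kj : Fin n × Fin 2 => stairCorner kj.1 kj.2 := by
  rintro ⟨k, j⟩ ⟨k', j'⟩ h
  have h0 := congrFun h 0
  have h1 := congrFun h 1
  simp only [stairCorner, Matrix.cons_val_zero, Matrix.cons_val_one, Matrix.cons_val_fin_one,
    Nat.cast_inj] at h0 h1
  rw [Prod.mk.injEq]
  exact ⟨Fin.ext (by omega), Fin.ext (by omega)⟩

def stairTile (k : ℕ) (j : Fin 2) : Set Pt := unitCube (stairCorner k j) ∩ diagStrip

theorem mem_stairTile {k : ℕ} {j : Fin 2} {p : Pt} :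
    p ∈ stairTile k j ↔ (((k + j : ℝ) ≤ p 0 ∧ p 0 ≤ k + j + 1) ∧ (k : ℝ) ≤ p 1 ∧ p 1 ≤ k + 1) ∧
      p 1 ≤ p 0 ∧ p 0 ≤ p 1 + 1 := by
  simp only [stairTile, unitCube, diagStrip, stairCorner, Set.mem_inter_iff, Set.mem_ofPred_eq,
    Fin.forall_fin_two, Matrix.cons_val_zero, Matrix.cons_val_one, Matrix.cons_val_fin_one]
  push_cast
  rfl

def stairIso (k : ℕ) : Fin 2 → (Pt ≃ᵢ Pt) :=
  ![(flipCoord 0).toIsometryEquiv.trans (IsometryEquiv.addLeft (pt (k + 1) k)),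
    (flipCoord 1).toIsometryEquiv.trans (IsometryEquiv.addLeft (pt (k + 1) (k + 1)))]

theorem stairIso_zero_apply (k : ℕ) (p : Pt) :
    stairIso k 0 p = pt (k + 1 - p 0) (k + p 1) := by
  ext i; fin_cases i <;> simp [stairIso, flipCoord_apply, sub_eq_add_neg]

theorem stairIso_one_apply (k : ℕ) (p : Pt) :
    stairIso k 1 p = pt (k + 1 + p 0) (k + 1 - p 1) := by
  ext i; fin_cases i <;> simp [stairIso, flipCoord_apply, sub_eq_add_neg]

theorem stairIso_image_T (k : ℕ) (j : Fin 2) : stairIso k j '' T = stairTile k j := by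
  suffices h : T = stairIso k j ⁻¹' stairTile k j by
    rw [h, Set.image_preimage_eq _ (stairIso k j).surjective]
  ext q
  rw [T_eq_setOf, Set.mem_preimage, mem_stairTile]
  fin_cases j <;>
  · simp only [Fin.zero_eta, Fin.mk_one, Nat.cast_zero, Nat.cast_one,
      stairIso_zero_apply, stairIso_one_apply, pt_apply_zero, pt_apply_one, Set.mem_ofPred_eq]
    constructor
    · rintro ⟨h0, h1, h⟩; refine ⟨⟨⟨?_, ?_⟩, ?_, ?_⟩, ?_, ?_⟩ <;> linarith
    · rintro ⟨⟨⟨_, _⟩, _, _⟩, _, _⟩; refine ⟨?_, ?_, ?_⟩ <;> linarith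

theorem exists_nat_lt_le_le_add_one {n : ℕ} (hn : n ≠ 0) {y : ℝ} (h0 : 0 ≤ y) (hy : y ≤ n) :
    ∃ k < n, (k : ℝ) ≤ y ∧ y ≤ k + 1 := by
  rcases hy.lt_or_eq with hlt | rfl
  · exact ⟨⌊y⌋₊, (Nat.floor_lt h0).2 hlt, Nat.floor_le h0, (Nat.lt_floor_add_one y).le⟩
  · refine ⟨n - 1, by omega, ?_, ?_⟩ <;> simp [Nat.cast_pred (Nat.pos_of_ne_zero hn)]

theorem iUnion_stairTile {n : ℕ} (hn : n ≠ 0) :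
    ⋃ kj : Fin n × Fin 2, stairTile kj.1 kj.2 = {p : Pt | 0 ≤ p 1 ∧ p 1 ≤ n} ∩ diagStrip := by
  ext p
  simp only [Set.mem_iUnion, mem_stairTile, Prod.exists]
  constructor
  · rintro ⟨k, j, ⟨-, hk0, hk1⟩, hs⟩
    have hkn : (k : ℝ) + 1 ≤ n := by exact_mod_cast k.isLt
    exact ⟨⟨(Nat.cast_nonneg _).trans hk0, by linarith⟩, hs⟩
  · rintro ⟨⟨h0, hn'⟩, hlo, hhi⟩
    obtain ⟨k, hk, hk0, hk1⟩ := exists_nat_lt_le_le_add_one hn h0 hn'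
    rcases le_or_gt (p 0) (k + 1) with hx | hx
    · refine ⟨⟨k, hk⟩, 0, ⟨?_, hk0, hk1⟩, hlo, hhi⟩
      simp only [Fin.val_zero, Nat.cast_zero, add_zero]
      constructor <;> linarith
    · refine ⟨⟨k, hk⟩, 1, ⟨?_, hk0, hk1⟩, hlo, hhi⟩
      simp only [Fin.val_one, Nat.cast_one]
      constructor <;> linarith

theorem tileableBy_parallelogram {n : ℕ} (hn : n ≠ 0) :
    TileableBy (convexHull ℝ {pt 0 0, pt 1 0, pt (n + 1) n, pt n n}) (n * 2) := by
  rw [show n * 2 = Fintype.card (Fin n × Fin 2) by simp]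
  refine TileableBy.of_fintype (fun kj => stairIso kj.1 kj.2) ?_ ?_
  · intro a b hab
    simp only [stairIso_image_T, stairTile]
    exact (pairwise_disjoint_interior_unitCube ((stairCorner_injective n).ne hab)).mono
      (interior_mono Set.inter_subset_left) (interior_mono Set.inter_subset_left)
  · rw [convexHull_parallelogram (by positivity), ← iUnion_stairTile hn]
    simp only [stairIso_image_T]

/-- The parallelogram with side lengths `1` and `8√2` is tileable by 16 copies of `T`. -/
theorem thin_parallelogram_tileable :
    TileableBy (convexHull ℝ {pt 0 0, pt 1 0, pt 9 8, pt 8 8}) 16 := by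
  have h := tileableBy_parallelogram (n := 8) (by norm_num)
  norm_num at h
  exact h
end
end

section
/- If a set S ⊆ ℝ² is tileable by n copies of T, then its image √2 · S = {√2 · x : x ∈ S} under the homothety with ratio √2 centered at the origin is tileable by 2n copies of T. -/
/-!
Cutting `√2 • T` along its altitude gives two copies of `T`. Each tile `fᵢ(T)` of `S`
scales to `gᵢ(√2 • T)`, where `gᵢ = (x ↦ √2 x) ∘ fᵢ ∘ (x ↦ x / √2)` is again an isometry
because `fᵢ` is affine; cutting every scaled tile in two tiles `√2 • S` by `2n` copies of `T`.
-/

open Real Pointwise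

noncomputable section

/-- Two subsets of the plane are congruent if some isometry maps one onto the other. -/
def PtCongruent (P Q : Set Pt) : Prop := ∃ f : Pt ≃ᵢ Pt, f '' P = Q

section Tiling

variable {E ι κ : Type*} [PseudoEMetricSpace E]

def IsTiling (P : Set E) (f : ι → E ≃ᵢ E) (S : Set E) : Prop :=
  Pairwise (fun i j => Disjoint (interior (f i '' P)) (interior (f j '' P))) ∧
    S = ⋃ i, f i '' P

namespace IsTiling

variable {P Q S : Set E} {f : ι → E ≃ᵢ E}

theorem comp_equiv (h : IsTiling P f S) (e : κ ≃ ι) : IsTiling P (f ∘ e) S :=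
  ⟨fun _ _ hij => h.1 (e.injective.ne hij), h.2.trans (e.iSup_comp (g := fun i => f i '' P)).symm⟩

theorem bind {g : κ → E ≃ᵢ E} (hf : IsTiling P f S) (hg : IsTiling Q g P) :
    IsTiling Q (fun ij : ι × κ => (g ij.2).trans (f ij.1)) S := by
  have image_trans (i : ι) (j : κ) : (g j).trans (f i) '' Q = f i '' (g j '' Q) :=
    Set.image_comp (f i) (g j) Q
  refine ⟨?_, ?_⟩
  · rintro ⟨i, j⟩ ⟨i', j'⟩ hne
    simp only [image_trans]
    by_cases hi : i = i'
    · subst hi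
      have hj : j ≠ j' := fun hj => hne (by rw [hj])
      have interior_image (A : Set E) : interior (f i '' A) = f i '' interior A :=
        ((f i).toHomeomorph.image_interior A).symm
      rw [interior_image, interior_image]
      exact (Set.disjoint_image_iff (f i).injective).2 (hg.1 hj)
    · have piece_subset (i : ι) (j : κ) : interior (f i '' (g j '' Q)) ⊆ interior (f i '' P) :=
        interior_mono (Set.image_mono (hg.2 ▸ Set.subset_iUnion (fun j => g j '' Q) j))
      exact (hf.1 hi).mono (piece_subset i j) (piece_subset i' j')
  · rw [hf.2, Set.iUnion_prod']
    conv_lhs => rw [hg.2]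
    simp only [Set.image_iUnion, image_trans]

end IsTiling

end Tiling

section Homothety

variable {E : Type*} [NormedAddCommGroup E] [NormedSpace ℝ E]

/-- By Mazur–Ulam `f = L + f 0` with `L` linear, so this is `x ↦ c • f (c⁻¹ • x)` when `c ≠ 0`. -/
def IsometryEquiv.conjSmul (f : E ≃ᵢ E) (c : ℝ) : E ≃ᵢ E :=
  f.toRealLinearIsometryEquiv.toIsometryEquiv.trans (IsometryEquiv.addRight (c • f 0))

theorem IsometryEquiv.conjSmul_smul (f : E ≃ᵢ E) (c : ℝ) (x : E) :
    f.conjSmul c (c • x) = c • f x := by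
  change f.toRealLinearIsometryEquiv (c • x) + c • f 0 = c • f x
  rw [map_smul, f.toRealLinearIsometryEquiv_apply, smul_sub, sub_add_cancel]

theorem IsometryEquiv.image_smul_conjSmul (f : E ≃ᵢ E) (c : ℝ) (A : Set E) :
    f.conjSmul c '' (c • A) = c • (f '' A) := by
  simp only [← Set.image_smul, Set.image_image, f.conjSmul_smul]

theorem IsTiling.smul {ι : Type*} {P S : Set E} {f : ι → E ≃ᵢ E} (h : IsTiling P f S)
    {c : ℝ} (hc : c ≠ 0) : IsTiling (c • P) (fun i => (f i).conjSmul c) (c • S) := by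
  refine ⟨fun i j hij => ?_, ?_⟩
  · simp only [IsometryEquiv.image_smul_conjSmul]
    rw [interior_smul₀ hc, interior_smul₀ hc, ← Set.image_smul, ← Set.image_smul]
    exact (Set.disjoint_image_iff (smul_right_injective E hc)).2 (h.1 hij)
  · simp only [h.2, Set.smul_set_iUnion, IsometryEquiv.image_smul_conjSmul]

theorem IsometryEquiv.image_convexHull (φ : E ≃ᵢ E) (s : Set E) :
    φ '' convexHull ℝ s = convexHull ℝ (φ '' s) :=
  φ.toRealAffineIsometryEquiv.toAffineEquiv.toAffineMap.image_convexHull s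

end Homothety

section Convex

variable {𝕜 E : Type*} [Field 𝕜] [LinearOrder 𝕜] [IsStrictOrderedRing 𝕜]
  [AddCommGroup E] [Module 𝕜 E]

theorem segment_eq_union_midpoint (b c : E) :
    segment 𝕜 b c = segment 𝕜 b (midpoint 𝕜 b c) ∪ segment 𝕜 (midpoint 𝕜 b c) c := by
  have hm : midpoint 𝕜 b c = (2⁻¹ : 𝕜) • b + (2⁻¹ : 𝕜) • c := by
    rw [midpoint_eq_smul_add, smul_add, invOf_eq_inv]
  refine Set.Subset.antisymm ?_ (Set.union_subset ?_ ?_)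
  · rintro x ⟨s, t, hs, ht, hst, rfl⟩
    rcases le_total 2⁻¹ s with hle | hle
    · exact .inl ⟨s - t, 2 * t, by linarith, by linarith, by linarith, by rw [hm]; module⟩
    · exact .inr ⟨2 * s, t - s, by linarith, by linarith, by linarith, by rw [hm]; module⟩
  · exact (convex_segment b c).segment_subset (left_mem_segment 𝕜 b c) (midpoint_mem_segment b c)
  · exact (convex_segment b c).segment_subset (midpoint_mem_segment b c) (right_mem_segment 𝕜 b c)

theorem convexHull_triple_eq_union_midpoint (a b c : E) :
    convexHull 𝕜 {a, b, c} =
      convexHull 𝕜 {midpoint 𝕜 b c, a, b} ∪ convexHull 𝕜 {midpoint 𝕜 b c, c, a} := by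
  rw [← convexJoin_singleton_segment, segment_eq_union_midpoint, convexJoin_union_right,
    convexJoin_singleton_segment, convexJoin_singleton_segment]
  congr 2 <;> ext <;> simp only [Set.mem_insert_iff, Set.mem_singleton_iff] <;> tauto

end Convex

theorem disjoint_interior_of_subset_preimage_Iic_of_subset_preimage_Ici {M : Type*}
    [AddCommGroup M] [TopologicalSpace M] [ContinuousAdd M] [Module ℝ M] [ContinuousSMul ℝ M]
    {ℓ : StrongDual ℝ M} (hℓ : ℓ ≠ 0) {A B : Set M} {c : ℝ}
    (hA : A ⊆ ℓ ⁻¹' Set.Iic c) (hB : B ⊆ ℓ ⁻¹' Set.Ici c) :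
    Disjoint (interior A) (interior B) := by
  have hopen := ℓ.isOpenMap_of_ne_zero hℓ
  have hA' := (interior_mono hA).trans hopen.interior_preimage_subset_preimage_interior
  have hB' := (interior_mono hB).trans hopen.interior_preimage_subset_preimage_interior
  rw [interior_Iic] at hA'
  rw [interior_Ici] at hB'
  exact (Set.Iio_disjoint_Ioi_same.preimage ℓ).mono hA' hB'

@[simp] theorem pt_apply_zero_s18 (x y : ℝ) : pt x y 0 = x := rfl

@[simp] theorem pt_apply_one_s18 (x y : ℝ) : pt x y 1 = y := rfl

theorem pt_add_pt_s18 (x y x' y' : ℝ) : pt x y + pt x' y' = pt (x + x') (y + y') := by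
  ext i; fin_cases i <;> rfl

theorem smul_pt_s18 (c x y : ℝ) : c • pt x y = pt (c * x) (c * y) := by
  ext i; fin_cases i <;> rfl

def planeRotation (a b : ℝ) (h : a ^ 2 + b ^ 2 = 1) : Pt ≃ₗᵢ[ℝ] Pt :=
  LinearIsometry.toLinearIsometryEquiv
    { toFun := fun p => pt (a * p 0 - b * p 1) (b * p 0 + a * p 1)
      map_add' := fun p q => by rw [pt_add_pt_s18]; congr 1 <;> simp only [PiLp.add_apply] <;> ring
      map_smul' := fun c p => by
        rw [RingHom.id_apply, smul_pt_s18]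
        congr 1 <;> simp only [PiLp.smul_apply, smul_eq_mul] <;> ring
      norm_map' := fun p => by
        simp only [LinearMap.coe_mk, AddHom.coe_mk, EuclideanSpace.norm_eq, Fin.sum_univ_two,
          pt_apply_zero_s18, pt_apply_one_s18, Real.norm_eq_abs, sq_abs]
        congr 1
        linear_combination (p 0 ^ 2 + p 1 ^ 2) * h }
    rfl

theorem planeRotation_pt (a b : ℝ) (h : a ^ 2 + b ^ 2 = 1) (x y : ℝ) :
    planeRotation a b h (pt x y) = pt (a * x - b * y) (b * x + a * y) := rfl

def planeMotion (a b : ℝ) (h : a ^ 2 + b ^ 2 = 1) (t : Pt) : Pt ≃ᵢ Pt :=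
  (planeRotation a b h).toIsometryEquiv.trans (IsometryEquiv.addRight t)

theorem image_planeMotion_T (a b : ℝ) (h : a ^ 2 + b ^ 2 = 1) (u v : ℝ) :
    planeMotion a b h (pt u v) '' T =
      convexHull ℝ {pt u v, pt (a + u) (b + v), pt (-b + u) (a + v)} := by
  rw [T, IsometryEquiv.image_convexHull, Set.image_insert_eq, Set.image_insert_eq,
    Set.image_singleton]
  simp only [planeMotion, IsometryEquiv.trans_apply, LinearIsometryEquiv.coe_toIsometryEquiv,
    planeRotation_pt, IsometryEquiv.addRight_apply, pt_add_pt_s18]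
  norm_num

theorem sqrt_two_div_two_sq : (√2 / 2) ^ 2 = 1 / 2 := by
  rw [div_pow, Real.sq_sqrt zero_le_two]; norm_num

def halfTriangleIso : Fin 2 → Pt ≃ᵢ Pt :=
  ![planeMotion (-(√2 / 2)) (-(√2 / 2)) (by rw [neg_sq, sqrt_two_div_two_sq]; norm_num)
      (pt (√2 / 2) (√2 / 2)),
    planeMotion (-(√2 / 2)) (√2 / 2) (by rw [neg_sq, sqrt_two_div_two_sq]; norm_num)
      (pt (√2 / 2) (√2 / 2))]

theorem image_halfTriangleIso_zero :
    halfTriangleIso 0 '' T = convexHull ℝ {pt (√2 / 2) (√2 / 2), pt 0 0, pt √2 0} := by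
  rw [halfTriangleIso, Matrix.cons_val_zero, image_planeMotion_T]
  norm_num

theorem image_halfTriangleIso_one :
    halfTriangleIso 1 '' T = convexHull ℝ {pt (√2 / 2) (√2 / 2), pt 0 √2, pt 0 0} := by
  rw [halfTriangleIso, Matrix.cons_val_one, Matrix.cons_val_zero, image_planeMotion_T]
  norm_num

theorem sqrt_two_smul_T : √2 • T = convexHull ℝ {pt 0 0, pt √2 0, pt 0 √2} := by
  rw [T, ← convexHull_smul, Set.smul_set_insert, Set.smul_set_insert, Set.smul_set_singleton,
    smul_pt_s18, smul_pt_s18, smul_pt_s18]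
  norm_num

theorem midpoint_pt_sqrt_two : midpoint ℝ (pt √2 0) (pt 0 √2) = pt (√2 / 2) (√2 / 2) := by
  rw [midpoint_eq_smul_add, pt_add_pt_s18, invOf_eq_inv, smul_pt_s18]
  congr 1 <;> ring

theorem isTiling_sqrt_two_smul_T : IsTiling T halfTriangleIso (√2 • T) := by
  refine ⟨?_, ?_⟩
  · set ℓ : StrongDual ℝ Pt := EuclideanSpace.proj 1 - EuclideanSpace.proj 0
    have hℓ : ℓ ≠ 0 := fun h => by simpa [ℓ] using congr($h (pt 0 1))
    have below : halfTriangleIso 0 '' T ⊆ ℓ ⁻¹' Set.Iic 0 := by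
      rw [image_halfTriangleIso_zero]
      refine convexHull_min ?_ ((convex_Iic 0).linear_preimage ℓ.toLinearMap)
      rintro p (rfl | rfl | rfl) <;> simp [ℓ]
    have above : halfTriangleIso 1 '' T ⊆ ℓ ⁻¹' Set.Ici 0 := by
      rw [image_halfTriangleIso_one]
      refine convexHull_min ?_ ((convex_Ici 0).linear_preimage ℓ.toLinearMap)
      rintro p (rfl | rfl | rfl) <;> simp [ℓ]
    have hdisj := disjoint_interior_of_subset_preimage_Iic_of_subset_preimage_Ici hℓ below above
    intro i j hij
    fin_cases i <;> fin_cases j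
    exacts [(hij rfl).elim, hdisj, hdisj.symm, (hij rfl).elim]
  · rw [sqrt_two_smul_T, convexHull_triple_eq_union_midpoint, midpoint_pt_sqrt_two,
      ← image_halfTriangleIso_zero, ← image_halfTriangleIso_one]
    ext p
    simp only [Set.mem_union, Set.mem_iUnion, Fin.exists_fin_two]

theorem tileableBy_iff_exists_isTiling (S : Set Pt) (n : ℕ) :
    TileableBy S n ↔ ∃ f : Fin n → Pt ≃ᵢ Pt, IsTiling T f S :=
  Iff.rfl

/-- If `S` is tileable by `n` copies of `T`, then the homothetic image `√2 • S` is tileable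
by `2n` copies of `T`. -/
theorem sqrt_two_smul_tileable (S : Set Pt) (n : ℕ) (htile : TileableBy S n) :
    TileableBy (Real.sqrt 2 • S) (2 * n) := by
  rw [tileableBy_iff_exists_isTiling] at htile ⊢
  obtain ⟨f, hf⟩ := htile
  have hscaled := (hf.smul (by positivity : √2 ≠ 0)).bind isTiling_sqrt_two_smul_T
  exact ⟨_, hscaled.comp_equiv (finProdFinEquiv.symm.trans (Equiv.prodComm _ _))⟩
end
end
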